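/- arXiv:2006.10715 — 4 statements merged into one kernel-verified Lean document; each statement's English description precedes it below -/
import Mathlib

section
/- Let $T$ be a finite set, $w_0(x) = 1$ for all $x \in T$, and suppose a binary tree of weight functions on $T$ is rooted at $w_0$ such that whenever a node $w$ splits into two children $w_1, w_2$, one has $w_1(T)^2 + w_2(T)^2 \le w(T)^2$, and whenever it has one child $w'$, $w'(T) \le w(T)$. If every leaf weight $w$ satisfies $w(T) \ge \alpha |T| / 2$ for some $\alpha \in (0, 1/2)$, then the number of leaves is at most $4/\alpha^2$. -/
open Finset

/-- A binary tree of weight functions on a finite set `T`. -/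
inductive WTree (α : Type*) where
  | leaf : (α → ℝ) → WTree α
  | node1 : (α → ℝ) → WTree α → WTree α
  | node2 : (α → ℝ) → WTree α → WTree α → WTree α

/-- The weight function at the root of the tree. -/
def WTree.root {α : Type*} : WTree α → (α → ℝ)
  | .leaf w => w
  | .node1 w _ => w
  | .node2 w _ _ => w

/-- The list of weight functions at the leaves of the tree. -/
def WTree.leaves {α : Type*} : WTree α → List (α → ℝ)
  | .leaf w => [w]
  | .node1 _ c => c.leaves
  | .node2 _ c1 c2 => c1.leaves ++ c2.leaves

/-- Validity: weights take values in `[0,1]` on `T`; a single child has total weight at most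
that of its parent; for a binary split, the squares of the children's total weights sum to at
most the square of the parent's total weight. -/
def WTree.valid {α : Type*} (T : Finset α) : WTree α → Prop
  | .leaf w => ∀ x ∈ T, 0 ≤ w x ∧ w x ≤ 1
  | .node1 w c => (∀ x ∈ T, 0 ≤ w x ∧ w x ≤ 1) ∧
      (∑ x ∈ T, c.root x) ≤ (∑ x ∈ T, w x) ∧ c.valid T
  | .node2 w c1 c2 => (∀ x ∈ T, 0 ≤ w x ∧ w x ≤ 1) ∧
      (∑ x ∈ T, c1.root x) ^ 2 + (∑ x ∈ T, c2.root x) ^ 2 ≤ (∑ x ∈ T, w x) ^ 2 ∧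
      c1.valid T ∧ c2.valid T

lemma WTree.root_nonneg {α : Type*} (T : Finset α) (t : WTree α) (h : t.valid T) :
    (0:ℝ) ≤ ∑ x ∈ T, t.root x := by
  cases t with
  | leaf w => exact Finset.sum_nonneg fun x hx => (h x hx).1
  | node1 w c => exact Finset.sum_nonneg fun x hx => (h.1 x hx).1
  | node2 w c1 c2 => exact Finset.sum_nonneg fun x hx => (h.1 x hx).1

lemma WTree.sq_sum_leaves {α : Type*} (T : Finset α) (t : WTree α) (h : t.valid T) :
    (t.leaves.map (fun w => (∑ x ∈ T, w x) ^ 2)).sum ≤ (∑ x ∈ T, t.root x) ^ 2 := by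
  induction t with
  | leaf w => simp [WTree.leaves, WTree.root]
  | node1 w c ih =>
      obtain ⟨h1, h2, h3⟩ := h
      refine le_trans (ih h3) ?_
      exact pow_le_pow_left₀ (WTree.root_nonneg T c h3) h2 2
  | node2 w c1 c2 ih1 ih2 =>
      obtain ⟨h1, h2, h3, h4⟩ := h
      simp only [WTree.leaves, List.map_append, List.sum_append]
      calc _ ≤ (∑ x ∈ T, c1.root x) ^ 2 + (∑ x ∈ T, c2.root x) ^ 2 :=
              add_le_add (ih1 h3) (ih2 h4)
        _ ≤ _ := h2

/-- If the root weight is identically `1`, every split preserves the sum-of-squares bound,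
and every leaf has total weight at least `α|T|/2`, then there are at most `4/α²` leaves. -/
theorem stmt4 {γ : Type*} (T : Finset γ) (hT : T.Nonempty) (t : WTree γ)
    (hroot : t.root = fun _ => 1) (hvalid : t.valid T)
    (a : ℝ) (ha : 0 < a) (ha2 : a < 1 / 2)
    (hleaf : ∀ w ∈ t.leaves, a * T.card / 2 ≤ ∑ x ∈ T, w x) :
    (t.leaves.length : ℝ) ≤ 4 / a ^ 2 := by
  have key := WTree.sq_sum_leaves T t hvalid
  rw [hroot] at key
  simp only [Finset.sum_const, nsmul_eq_mul, mul_one] at key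
  set c : ℝ := a * T.card / 2 with hc
  have hc0 : 0 < c := by
    have : (0:ℝ) < T.card := by exact_mod_cast hT.card_pos
    positivity
  have hlb : (t.leaves.length : ℝ) * c ^ 2 ≤
      (t.leaves.map (fun w => (∑ x ∈ T, w x) ^ 2)).sum := by
    have : ∀ y ∈ t.leaves.map (fun w => (∑ x ∈ T, w x) ^ 2), c ^ 2 ≤ y := by
      intro y hy
      obtain ⟨w, hw, rfl⟩ := List.mem_map.mp hy
      exact pow_le_pow_left₀ hc0.le (hleaf w hw) 2
    calc (t.leaves.length : ℝ) * c ^ 2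
        = ((t.leaves.map (fun w => (∑ x ∈ T, w x) ^ 2)).length : ℝ) * c ^ 2 := by
          rw [List.length_map]
      _ ≤ _ := by
          have := List.card_nsmul_le_sum _ _ this
          simpa [nsmul_eq_mul, mul_comm] using this
  have hkey : (t.leaves.length : ℝ) * c ^ 2 ≤ (T.card : ℝ) ^ 2 := hlb.trans key
  have : (t.leaves.length : ℝ) ≤ (T.card : ℝ) ^ 2 / c ^ 2 :=
    (le_div_iff₀ (by positivity)).mpr hkey
  refine this.trans (le_of_eq ?_)
  have hT0 : (0:ℝ) < T.card := by exact_mod_cast hT.card_pos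
  field_simp [hc]
  ring
end

section
/- Let $T$ be a finite set, $\alpha, \epsilon \in (0,1)$, and $H$ a finite index set with weight functions $w_u : T \to [0,1]$ for $u \in H$ satisfying $w_u(T) \ge \alpha |T|$ for all $u$, and pairwise bounds $\sum_{x \in T} \min(w_u(x), w_{u'}(x)) \le \frac{\alpha}{10}(w_u(T) + w_{u'}(T))$ for all $u \ne u'$ in $H$. Then $|H| \le 2/\alpha$. -/
open Finset

/-- List-size reduction: weight functions of mass at least `α|T|` with small pairwise
overlaps number at most `2/α`. -/
theorem stmt5 {γ ι : Type*} (T : Finset γ) (hT : T.Nonempty) (H : Finset ι)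
    (a : ℝ) (ha : 0 < a) (ha1 : a < 1) (w : ι → γ → ℝ)
    (hw : ∀ u ∈ H, ∀ x ∈ T, 0 ≤ w u x ∧ w u x ≤ 1)
    (hmass : ∀ u ∈ H, a * T.card ≤ ∑ x ∈ T, w u x)
    (hpair : ∀ u ∈ H, ∀ u' ∈ H, u ≠ u' →
      ∑ x ∈ T, min (w u x) (w u' x) ≤ a / 10 * ((∑ x ∈ T, w u x) + ∑ x ∈ T, w u' x)) :
    (H.card : ℝ) ≤ 2 / a := by
  classical
  by_contra hcon
  push_neg at hcon
  set n : ℕ := Nat.floor (2 / a) + 1 with hn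
  have h2a : (0:ℝ) ≤ 2 / a := by positivity
  have hfl : (Nat.floor (2 / a) : ℝ) ≤ 2 / a := Nat.floor_le h2a
  have hnH : n ≤ H.card := by
    have : (Nat.floor (2 / a) : ℝ) < H.card := lt_of_le_of_lt hfl hcon
    exact_mod_cast Nat.cast_lt.mp this
  obtain ⟨S, hSH, hScard⟩ := Finset.exists_subset_card_eq hnH
  have hSmem : ∀ u ∈ S, u ∈ H := fun u hu => hSH hu
  have hS0 : S.Nonempty := Finset.card_pos.mp (by rw [hScard]; omega)
  -- pointwise inequality
  have hpt : ∀ x ∈ T, ∑ u ∈ S, w u x ≤ 1 + ∑ p ∈ S.offDiag, min (w p.1 x) (w p.2 x) := by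
    intro x hx
    obtain ⟨u0, hu0S, hu0max⟩ := Finset.exists_max_image S (fun u => w u x) hS0
    have h1 : ∑ u ∈ S, w u x = w u0 x + ∑ u ∈ S.erase u0, w u x :=
      (Finset.add_sum_erase S _ hu0S).symm
    have h2 : ∑ u ∈ S.erase u0, w u x = ∑ u ∈ S.erase u0, min (w u x) (w u0 x) := by
      apply Finset.sum_congr rfl
      intro u hu
      exact (min_eq_left (hu0max u (Finset.mem_of_mem_erase hu))).symm
    have h3 : ∑ u ∈ S.erase u0, min (w u x) (w u0 x)
        ≤ ∑ p ∈ S.offDiag, min (w p.1 x) (w p.2 x) := by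
      have hmap : ∑ u ∈ S.erase u0, min (w u x) (w u0 x)
          = ∑ p ∈ (S.erase u0).map ⟨fun u => (u, u0), fun _ _ h => (Prod.mk.injEq ..).mp h |>.1⟩,
              min (w p.1 x) (w p.2 x) := by
        rw [Finset.sum_map]
        rfl
      rw [hmap]
      apply Finset.sum_le_sum_of_subset_of_nonneg
      · intro p hp
        simp only [Finset.mem_map, Function.Embedding.coeFn_mk] at hp
        obtain ⟨u, hu, rfl⟩ := hp
        exact Finset.mem_offDiag.mpr ⟨Finset.mem_of_mem_erase hu, hu0S, Finset.ne_of_mem_erase hu⟩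
      · intro p hp _
        exact le_min ((hw p.1 (hSmem p.1 (Finset.mem_offDiag.mp hp).1) x hx).1)
          ((hw p.2 (hSmem p.2 (Finset.mem_offDiag.mp hp).2.1) x hx).1)
    have h4 : w u0 x ≤ 1 := (hw u0 (hSmem u0 hu0S) x hx).2
    linarith [h1, h2, h3, h4]
  set W : ι → ℝ := fun u => ∑ x ∈ T, w u x with hW
  have hsum1 : ∑ u ∈ S, W u ≤ (T.card : ℝ)
      + ∑ p ∈ S.offDiag, ∑ x ∈ T, min (w p.1 x) (w p.2 x) := by
    calc ∑ u ∈ S, W u = ∑ x ∈ T, ∑ u ∈ S, w u x := Finset.sum_comm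
      _ ≤ ∑ x ∈ T, (1 + ∑ p ∈ S.offDiag, min (w p.1 x) (w p.2 x)) :=
          Finset.sum_le_sum hpt
      _ = (T.card : ℝ) + ∑ x ∈ T, ∑ p ∈ S.offDiag, min (w p.1 x) (w p.2 x) := by
          rw [Finset.sum_add_distrib, Finset.sum_const, nsmul_eq_mul, mul_one]
      _ = (T.card : ℝ) + ∑ p ∈ S.offDiag, ∑ x ∈ T, min (w p.1 x) (w p.2 x) := by
          rw [Finset.sum_comm]
  have hsum2 : ∑ p ∈ S.offDiag, ∑ x ∈ T, min (w p.1 x) (w p.2 x)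
      ≤ a / 10 * ∑ p ∈ S.offDiag, (W p.1 + W p.2) := by
    rw [Finset.mul_sum]
    apply Finset.sum_le_sum
    intro p hp
    obtain ⟨h1, h2, h3⟩ := Finset.mem_offDiag.mp hp
    exact hpair p.1 (hSmem _ h1) p.2 (hSmem _ h2) h3
  have hsum3 : ∑ p ∈ S.offDiag, (W p.1 + W p.2) = 2 * ((n : ℝ) - 1) * ∑ u ∈ S, W u := by
    have hprod : ∑ p ∈ S ×ˢ S, (W p.1 + W p.2) = 2 * (n : ℝ) * ∑ u ∈ S, W u := by
      rw [Finset.sum_product]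
      simp only [Finset.sum_add_distrib, Finset.sum_const, nsmul_eq_mul, hScard]
      rw [← Finset.mul_sum]
      ring
    have hdiag : ∑ p ∈ S.diag, (W p.1 + W p.2) = 2 * ∑ u ∈ S, W u := by
      rw [Finset.sum_diag, two_mul, ← Finset.sum_add_distrib]
    have hsplit : ∑ p ∈ S.diag, (W p.1 + W p.2) + ∑ p ∈ S.offDiag, (W p.1 + W p.2)
        = ∑ p ∈ S ×ˢ S, (W p.1 + W p.2) := by
      rw [← Finset.sum_union (Finset.disjoint_diag_offDiag S), Finset.diag_union_offDiag]
    rw [hdiag, hprod] at hsplit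
    linarith
  have hWnn : ∀ u ∈ S, 0 ≤ W u := by
    intro u hu
    exact Finset.sum_nonneg fun x hx => (hw u (hSmem u hu) x hx).1
  have hmassS : (n : ℝ) * (a * T.card) ≤ ∑ u ∈ S, W u := by
    calc (n : ℝ) * (a * T.card) = ∑ _u ∈ S, a * (T.card : ℝ) := by
          rw [Finset.sum_const, hScard, nsmul_eq_mul]
      _ ≤ ∑ u ∈ S, W u := Finset.sum_le_sum fun u hu => hmass u (hSmem u hu)
  have hTpos : (0:ℝ) < T.card := by
    exact_mod_cast Finset.card_pos.mpr hT
  have hna1 : ((n : ℝ) - 1) * a ≤ 2 := by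
    have : ((n : ℝ) - 1) = Nat.floor (2 / a) := by
      rw [hn]; push_cast; ring
    rw [this]
    calc (Nat.floor (2 / a) : ℝ) * a ≤ 2 / a * a := by
          exact mul_le_mul_of_nonneg_right hfl ha.le
      _ = 2 := by field_simp
  have hna2 : 2 < (n : ℝ) * a := by
    have h1 : 2 / a < (n : ℝ) := by
      rw [hn]; push_cast
      exact Nat.lt_floor_add_one (2/a)
    calc 2 = 2 / a * a := by field_simp
      _ < (n : ℝ) * a := by exact mul_lt_mul_of_pos_right h1 ha
  set M := ∑ u ∈ S, W u with hM
  have hMnn : 0 ≤ M := Finset.sum_nonneg hWnn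
  -- combine
  have hfinal : M ≤ (T.card : ℝ) + a / 10 * (2 * ((n:ℝ) - 1) * M) := by
    rw [← hsum3]; linarith
  have hbig : 2 * (T.card : ℝ) < M := by
    calc 2 * (T.card : ℝ) < (n : ℝ) * a * T.card := by
          exact mul_lt_mul_of_pos_right hna2 hTpos
      _ = (n : ℝ) * (a * T.card) := by ring
      _ ≤ M := hmassS
  nlinarith [hfinal, hbig, hna1, hMnn, hTpos, mul_le_mul_of_nonneg_right hna1 hMnn]
end

section
/- Let $T$ be a finite set, $S \subseteq T$, $\alpha \in (0, 1/2)$. Consider a sequence of weight functions $w^{(0)}, w^{(1)}, \ldots, w^{(m)}$ on $T$ with $w^{(0)} \equiv 1$, each $w^{(i+1)} \le w^{(i)}$ pointwise, and suppose each step satisfies $\frac{w^{(i)}(S) - w^{(i+1)}(S)}{w^{(i)}(S)} \le \frac{1}{24 \lg(2/\alpha)} \cdot \frac{w^{(i)}(T) - w^{(i+1)}(T)}{w^{(i)}(T)}$, and that $w^{(i)}(T) \ge \alpha|T|/2$ for all $i \le m$. Then $w^{(m)}(S) \ge 3|S|/4$. -/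
open Finset

/-!
Put `c = 1/(24 lg(2/α))`. By Bernoulli's inequality `t ^ c ≤ 1 - c (1 - t)`, the hypothesis on
a single step gives `w⁽ⁱ⁺¹⁾(S) ≥ w⁽ⁱ⁾(S) · (w⁽ⁱ⁺¹⁾(T) / w⁽ⁱ⁾(T)) ^ c`, so `w⁽ⁱ⁾(S) / w⁽ⁱ⁾(T) ^ c`
never decreases. Hence
`w⁽ᵐ⁾(S) ≥ |S| · (w⁽ᵐ⁾(T) / |T|) ^ c ≥ |S| · (α/2) ^ c = 2 ^ (-1/24) · |S| ≥ 3|S|/4`.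
-/

lemma rpow_le_one_sub_mul_one_sub {t c : ℝ} (ht : 0 ≤ t) (hc0 : 0 ≤ c) (hc1 : c ≤ 1) :
    t ^ c ≤ 1 - c * (1 - t) := by
  have h := rpow_one_add_le_one_add_mul_self (s := t - 1) (by linarith) hc0 hc1
  rw [add_sub_cancel] at h
  linarith

lemma mul_rpow_div_le_of_relative_loss_le {s s' τ τ' c : ℝ} (hs : 0 < s) (hτ : 0 < τ)
    (hτ' : 0 ≤ τ') (hc0 : 0 ≤ c) (hc1 : c ≤ 1)
    (hloss : (s - s') / s ≤ c * ((τ - τ') / τ)) :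
    s * (τ' / τ) ^ c ≤ s' := by
  have hratio : (τ - τ') / τ = 1 - τ' / τ := by field_simp
  rw [div_le_iff₀ hs, hratio] at hloss
  calc s * (τ' / τ) ^ c ≤ s * (1 - c * (1 - τ' / τ)) :=
        mul_le_mul_of_nonneg_left (rpow_le_one_sub_mul_one_sub (by positivity) hc0 hc1) hs.le
    _ ≤ s' := by linarith

lemma mul_rpow_div_le_of_forall_relative_loss_le {s τ : ℕ → ℝ} {c : ℝ} (hc0 : 0 ≤ c)
    (hc1 : c ≤ 1) (hs : 0 < s 0) :
    ∀ m : ℕ, (∀ i ≤ m, 0 < τ i) →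
      (∀ i < m, (s i - s (i + 1)) / s i ≤ c * ((τ i - τ (i + 1)) / τ i)) →
      s 0 * (τ m / τ 0) ^ c ≤ s m
  | 0, hτ, _ => by rw [div_self (hτ 0 le_rfl).ne', Real.one_rpow, mul_one]
  | m + 1, hτ, hloss => by
    have ih := mul_rpow_div_le_of_forall_relative_loss_le hc0 hc1 hs m
      (fun i hi => hτ i (by omega)) (fun i hi => hloss i (by omega))
    have hτm := hτ m (by omega)
    have hτ0 := hτ 0 (by omega)
    have hτsucc := hτ (m + 1) le_rfl
    have hsm : 0 < s m := lt_of_lt_of_le (by positivity) ih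
    have hstep := mul_rpow_div_le_of_relative_loss_le hsm hτm hτsucc.le hc0 hc1
      (hloss m (by omega))
    calc s 0 * (τ (m + 1) / τ 0) ^ c = s 0 * (τ m / τ 0) ^ c * (τ (m + 1) / τ m) ^ c := by
          rw [mul_assoc, ← Real.mul_rpow (div_pos hτm hτ0).le (div_pos hτsucc hτm).le]
          field_simp
      _ ≤ s m * (τ (m + 1) / τ m) ^ c := by gcongr
      _ ≤ s (m + 1) := hstep

lemma div_two_rpow_inv_logb_two_div {a : ℝ} (ha : 0 < a) (ha2 : a < 2) (k : ℝ) :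
    (a / 2) ^ (1 / (k * Real.logb 2 (2 / a))) = (2 : ℝ) ^ (-(1 / k)) := by
  have hL : Real.logb 2 (2 / a) ≠ 0 :=
    (Real.logb_pos one_lt_two ((one_lt_div ha).mpr ha2)).ne'
  have ha' : a / 2 = (2 : ℝ) ^ (-Real.logb 2 (2 / a)) := by
    rw [Real.rpow_neg zero_le_two, Real.rpow_logb two_pos (by norm_num) (by positivity), inv_div]
  rw [ha', ← Real.rpow_mul zero_le_two]
  congr 1
  field_simp

lemma three_quarters_le_two_rpow_neg_inv_24 : (3 / 4 : ℝ) ≤ (2 : ℝ) ^ (-(1 / 24) : ℝ) := by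
  have hpow : ((2 : ℝ) ^ (-(1 / 24) : ℝ)) ^ (24 : ℕ) = 1 / 2 := by
    rw [← Real.rpow_natCast, ← Real.rpow_mul zero_le_two]
    norm_num
  rw [← pow_le_pow_iff_left₀ (by norm_num) (by positivity) (by norm_num : (24 : ℕ) ≠ 0), hpow]
  norm_num

theorem stmt14_general {γ : Type*} (T S : Finset γ) (hST : S ⊆ T)
    (a : ℝ) (ha : 0 < a) (ha2 : a < 1 / 2)
    (m : ℕ) (w : ℕ → γ → ℝ)
    (hw0 : ∀ x ∈ T, w 0 x = 1)
    (hstep : ∀ i < m,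
      ((∑ x ∈ S, w i x) - ∑ x ∈ S, w (i + 1) x) / (∑ x ∈ S, w i x) ≤
        1 / (24 * Real.logb 2 (2 / a)) *
          (((∑ x ∈ T, w i x) - ∑ x ∈ T, w (i + 1) x) / (∑ x ∈ T, w i x)))
    (hlow : ∀ i ≤ m, a * T.card / 2 ≤ ∑ x ∈ T, w i x) :
    3 * S.card / 4 ≤ ∑ x ∈ S, w m x := by
  rcases S.eq_empty_or_nonempty with rfl | hSne
  · simp
  have hS0 : ∑ x ∈ S, w 0 x = S.card := by
    simp [Finset.sum_congr rfl fun x hx => hw0 x (hST hx)]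
  have hT0 : ∑ x ∈ T, w 0 x = T.card := by simp [Finset.sum_congr rfl hw0]
  have hTcard : (0 : ℝ) < T.card := by exact_mod_cast (hSne.mono hST).card_pos
  have hτ : ∀ i ≤ m, 0 < ∑ x ∈ T, w i x := fun i hi =>
    lt_of_lt_of_le (by positivity) (hlow i hi)
  set c := 1 / (24 * Real.logb 2 (2 / a))
  have hL : 1 ≤ Real.logb 2 (2 / a) := by
    rw [← Real.logb_self_eq_one one_lt_two]
    exact Real.logb_le_logb_of_le one_lt_two two_pos ((le_div_iff₀ ha).mpr (by linarith))
  have hc0 : 0 ≤ c := by positivity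
  have hc1 : c ≤ 1 := by rw [div_le_one (by positivity)]; linarith
  have hmain := mul_rpow_div_le_of_forall_relative_loss_le (s := fun i => ∑ x ∈ S, w i x)
    hc0 hc1 (by rw [hS0]; exact_mod_cast hSne.card_pos) m hτ hstep
  have hratio : (a / 2) ^ c ≤ ((∑ x ∈ T, w m x) / ∑ x ∈ T, w 0 x) ^ c := by
    rw [hT0]
    exact Real.rpow_le_rpow (by positivity)
      ((le_div_iff₀ hTcard).mpr (by linarith [hlow m le_rfl])) hc0
  rw [div_two_rpow_inv_logb_two_div ha (by linarith)] at hratio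
  calc 3 * (S.card : ℝ) / 4 = S.card * (3 / 4) := by ring
    _ ≤ S.card * ((∑ x ∈ T, w m x) / ∑ x ∈ T, w 0 x) ^ c := by
        gcongr
        exact three_quarters_le_two_rpow_neg_inv_24.trans hratio
    _ ≤ ∑ x ∈ S, w m x := hS0 ▸ hmain

/-- Along any sequence of "nice" downweighting steps in which each step removes from `S` a
relative fraction at most `1/(24 lg(2/α))` of the relative fraction removed from `T`, and
in which the total weight of `T` stays above `α|T|/2`, the weight of `S` stays above `3|S|/4`. -/
theorem stmt14 {γ : Type*} (T S : Finset γ) (hST : S ⊆ T)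
    (a : ℝ) (ha : 0 < a) (ha2 : a < 1 / 2)
    (hS : a * T.card ≤ (S.card : ℝ))
    (m : ℕ) (w : ℕ → γ → ℝ)
    (hw0 : ∀ x ∈ T, w 0 x = 1)
    (hwb : ∀ i ≤ m, ∀ x ∈ T, 0 ≤ w i x ∧ w i x ≤ 1)
    (hmono : ∀ i < m, ∀ x ∈ T, w (i + 1) x ≤ w i x)
    (hstep : ∀ i < m,
      ((∑ x ∈ S, w i x) - ∑ x ∈ S, w (i + 1) x) / (∑ x ∈ S, w i x) ≤
        1 / (24 * Real.logb 2 (2 / a)) *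
          (((∑ x ∈ T, w i x) - ∑ x ∈ T, w (i + 1) x) / (∑ x ∈ T, w i x)))
    (hlow : ∀ i ≤ m, a * T.card / 2 ≤ ∑ x ∈ T, w i x) :
    3 * S.card / 4 ≤ ∑ x ∈ S, w m x :=
  stmt14_general T S hST a ha ha2 m w hw0 hstep hlow
end

section
/- Let $T \subset \mathbb{R}^d$ be finite with weight function $w$, $w(T) > 0$, and let $\lambda^*$ be such that for every unit vector $v$, $\frac{1}{w(T)}\sum_{x\in T} w(x)(v\cdot(x - \mu_w(T)))^2 \le 2\lambda^*$. Let $S \subseteq T$ with $w(S) \ge \alpha w(T)/2$ and $w(S) \ge 3|S|/4$, and suppose the uniform (unweighted) variance of $v \cdot S$ is at most 1 for every unit vector $v$ (i.e., $\mathrm{Cov}[S] \preceq I$). Then $\|\mu(S) - \mu_w(T)\|_2 \le 1 + \sqrt{16\lambda^*/\alpha}$, where $\mu(S)$ is the unweighted mean of $S$. -/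
open Finset
open scoped RealInnerProductSpace

/-!
Fix a unit vector `v` and project onto it. Since `S` carries at least an `α/2` fraction of the
weight, whose second moment around `μwT` is at most `2λ* w(T)`, Cauchy–Schwarz bounds the
`w`-weighted mean of `⟪v, x - μwT⟫` over `S` by `√(4λ*/α)`. Passing from this weighted mean to the
uniform one moves it by `|∑ (1 - w x) ⟪v, x - μS⟫| / w(S) ≤ √((|S| - w(S)) |S|) / w(S) ≤ 1`, by
Cauchy–Schwarz again, `Cov S ≼ I` and `w(S) ≥ 3|S|/4`. Hence `⟪v, μS - μwT⟫ ≤ 1 + √(4λ*/α)`.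
-/

theorem norm_le_of_forall_unit_inner_le {E : Type*} [NormedAddCommGroup E] [InnerProductSpace ℝ E]
    {x : E} {c : ℝ} (hc : 0 ≤ c) (h : ∀ v : E, ‖v‖ = 1 → ⟪v, x⟫ ≤ c) : ‖x‖ ≤ c := by
  rcases eq_or_ne x 0 with rfl | hx
  · simpa using hc
  have hx' : ‖x‖ ≠ 0 := norm_ne_zero_iff.mpr hx
  calc ‖x‖ = ⟪‖x‖⁻¹ • x, x⟫ := by
        rw [real_inner_smul_left, real_inner_self_eq_norm_sq]; field_simp
    _ ≤ c := h _ (by rw [norm_smul, norm_inv, norm_norm, inv_mul_cancel₀ hx'])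

namespace Finset

variable {ι : Type*} {s t : Finset ι} {w f : ι → ℝ}

theorem sq_sum_mul_le_sum_mul_sum_mul_sq (hw : ∀ i ∈ s, 0 ≤ w i) :
    (∑ i ∈ s, w i * f i) ^ 2 ≤ (∑ i ∈ s, w i) * ∑ i ∈ s, w i * f i ^ 2 :=
  sum_sq_le_sum_mul_sum_of_sq_le_mul s hw (fun i hi => mul_nonneg (hw i hi) (sq_nonneg _))
    fun i _ => le_of_eq (by ring)

theorem sq_sum_mul_le_of_sum_eq_zero (hw : ∀ i ∈ s, 0 ≤ w i ∧ w i ≤ 1)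
    (hf : ∑ i ∈ s, f i = 0) :
    (∑ i ∈ s, w i * f i) ^ 2 ≤ (#s - ∑ i ∈ s, w i) * ∑ i ∈ s, f i ^ 2 := by
  have hshift : ∑ i ∈ s, w i * f i = -∑ i ∈ s, (1 - w i) * f i := by
    simp only [sub_mul, one_mul, sum_sub_distrib, hf]; ring
  have hmass : ∑ i ∈ s, (1 - w i) ^ 2 ≤ #s - ∑ i ∈ s, w i := by
    rw [← nsmul_one (#s), ← sum_const, ← sum_sub_distrib]
    exact sum_le_sum fun i hi => by nlinarith [hw i hi]
  calc (∑ i ∈ s, w i * f i) ^ 2 = (∑ i ∈ s, (1 - w i) * f i) ^ 2 := by rw [hshift, neg_sq]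
    _ ≤ (∑ i ∈ s, (1 - w i) ^ 2) * ∑ i ∈ s, f i ^ 2 := sum_mul_sq_le_sq_mul_sq _ _ _
    _ ≤ (#s - ∑ i ∈ s, w i) * ∑ i ∈ s, f i ^ 2 :=
        mul_le_mul_of_nonneg_right hmass (sum_nonneg fun i _ => sq_nonneg _)

theorem le_one_add_sqrt_of_weighted_moment_le {m lam a : ℝ} (hst : s ⊆ t)
    (hw : ∀ i ∈ t, 0 ≤ w i ∧ w i ≤ 1) (ht : 0 < ∑ i ∈ t, w i) (ha : 0 < a)
    (hmoment : ∑ i ∈ t, w i * f i ^ 2 ≤ 2 * lam * ∑ i ∈ t, w i)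
    (hs : a * (∑ i ∈ t, w i) / 2 ≤ ∑ i ∈ s, w i) (hs' : 3 * #s / 4 ≤ ∑ i ∈ s, w i)
    (hcenter : ∑ i ∈ s, (f i - m) = 0) (hvar : ∑ i ∈ s, (f i - m) ^ 2 ≤ #s) :
    m ≤ 1 + √(4 * lam / a) := by
  set W := ∑ i ∈ t, w i
  set wS := ∑ i ∈ s, w i
  have hws : ∀ i ∈ s, 0 ≤ w i ∧ w i ≤ 1 := fun i hi => hw i (hst hi)
  have hwS : 0 < wS := (by positivity : 0 < a * W / 2).trans_le hs
  have hwS_le : wS ≤ #s := by simpa using sum_le_sum fun i hi => (hws i hi).2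
  have hlam : 0 ≤ lam := by
    have := sum_nonneg fun i hi => mul_nonneg (hw i hi).1 (sq_nonneg (f i))
    nlinarith
  have hmean : |∑ i ∈ s, w i * f i| ≤ wS * √(4 * lam / a) := by
    refine abs_le_of_sq_le_sq ?_ (by positivity)
    calc (∑ i ∈ s, w i * f i) ^ 2 ≤ wS * ∑ i ∈ s, w i * f i ^ 2 :=
          sq_sum_mul_le_sum_mul_sum_mul_sq fun i hi => (hws i hi).1
      _ ≤ wS * (2 * lam * W) := by
          gcongr
          exact (sum_le_sum_of_subset_of_nonneg hst fun i hi _ =>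
            mul_nonneg (hw i hi).1 (sq_nonneg _)).trans hmoment
      _ ≤ wS * (wS * (4 * lam / a)) :=
          mul_le_mul_of_nonneg_left (by rw [mul_div_assoc', le_div_iff₀ ha]; nlinarith) hwS.le
      _ = (wS * √(4 * lam / a)) ^ 2 := by rw [mul_pow, Real.sq_sqrt (by positivity)]; ring
  have hshift : |∑ i ∈ s, w i * (f i - m)| ≤ wS := by
    refine abs_le_of_sq_le_sq ?_ hwS.le
    calc (∑ i ∈ s, w i * (f i - m)) ^ 2 ≤ (#s - wS) * #s :=
          (sq_sum_mul_le_of_sum_eq_zero hws hcenter).trans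
            (mul_le_mul_of_nonneg_left hvar (sub_nonneg.mpr hwS_le))
      _ ≤ wS ^ 2 := by nlinarith
  have hsplit : ∑ i ∈ s, w i * f i = m * wS + ∑ i ∈ s, w i * (f i - m) := by
    simp only [mul_sub, sum_sub_distrib, ← sum_mul]; ring
  have hscaled : m * wS ≤ (1 + √(4 * lam / a)) * wS := by
    linarith [le_abs_self (∑ i ∈ s, w i * f i), neg_abs_le (∑ i ∈ s, w i * (f i - m))]
  exact le_of_mul_le_mul_right hscaled hwS

end Finset

theorem stmt15_general {d : ℕ} (T S : Finset (EuclideanSpace ℝ (Fin d))) (hST : S ⊆ T)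
    (w : EuclideanSpace ℝ (Fin d) → ℝ)
    (hw : ∀ x ∈ T, 0 ≤ w x ∧ w x ≤ 1) (hT : 0 < ∑ x ∈ T, w x)
    (a lam : ℝ) (ha : 0 < a)
    (μwT : EuclideanSpace ℝ (Fin d))
    (hlam : ∀ v : EuclideanSpace ℝ (Fin d), ‖v‖ = 1 →
      (∑ x ∈ T, w x)⁻¹ * ∑ x ∈ T, w x * ⟪v, x - μwT⟫ ^ 2 ≤ 2 * lam)
    (hwS : a * (∑ x ∈ T, w x) / 2 ≤ ∑ x ∈ S, w x)
    (hwS2 : 3 * S.card / 4 ≤ ∑ x ∈ S, w x)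
    (μS : EuclideanSpace ℝ (Fin d))
    (hμS : μS = (S.card : ℝ)⁻¹ • ∑ x ∈ S, x)
    (hcov : ∀ v : EuclideanSpace ℝ (Fin d), ‖v‖ = 1 →
      (S.card : ℝ)⁻¹ * ∑ x ∈ S, ⟪v, x - μS⟫ ^ 2 ≤ 1) :
    ‖μS - μwT‖ ≤ 1 + Real.sqrt (16 * lam / a) := by
  have hS : 0 < (#S : ℝ) := by
    have hne : S.Nonempty :=
      nonempty_of_sum_ne_zero ((by positivity : 0 < a * _ / 2).trans_le hwS).ne'
    exact_mod_cast hne.card_pos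
  have hcenter : ∑ x ∈ S, (x - μS) = 0 := by
    rw [sum_sub_distrib, sum_const, hμS, ← Nat.cast_smul_eq_nsmul ℝ, smul_smul,
      mul_inv_cancel₀ hS.ne', one_smul, sub_self]
  refine norm_le_of_forall_unit_inner_le (by positivity) fun v hv => ?_
  have hproj : ∀ x, ⟪v, x - μwT⟫ - ⟪v, μS - μwT⟫ = ⟪v, x - μS⟫ := fun x => by
    rw [← inner_sub_right, sub_sub_sub_cancel_right]
  have hbound := le_one_add_sqrt_of_weighted_moment_le (f := fun x => ⟪v, x - μwT⟫)
    (m := ⟪v, μS - μwT⟫) hST hw hT ha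
    (by have := (inv_mul_le_iff₀ hT).mp (hlam v hv); linarith) hwS hwS2
    (by simp only [hproj, ← inner_sum, hcenter, inner_zero_right])
    (by simpa only [hproj, mul_one] using (inv_mul_le_iff₀ hS).mp (hcov v hv))
  have hsqrt : √(16 * lam / a) = 2 * √(4 * lam / a) := by
    rw [show 16 * lam / a = 2 ^ 2 * (4 * lam / a) by ring, Real.sqrt_mul (by positivity),
      Real.sqrt_sq zero_le_two]
  linarith [Real.sqrt_nonneg (4 * lam / a)]

/-- If the weighted second moments of `T` around its weighted mean are at most `2λ*` in every
direction, `S` carries at least an `α/2` fraction of the weight and most of its own mass, and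
the inliers `S` have covariance at most `I`, then the unweighted mean of `S` is within
`1 + √(16λ*/α)` of the weighted mean of `T`. -/
theorem stmt15 {d : ℕ} (T S : Finset (EuclideanSpace ℝ (Fin d))) (hST : S ⊆ T)
    (w : EuclideanSpace ℝ (Fin d) → ℝ)
    (hw : ∀ x ∈ T, 0 ≤ w x ∧ w x ≤ 1) (hT : 0 < ∑ x ∈ T, w x)
    (a lam : ℝ) (ha : 0 < a)
    (μwT : EuclideanSpace ℝ (Fin d))
    (hμwT : μwT = (∑ x ∈ T, w x)⁻¹ • ∑ x ∈ T, w x • x)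
    (hlam : ∀ v : EuclideanSpace ℝ (Fin d), ‖v‖ = 1 →
      (∑ x ∈ T, w x)⁻¹ * ∑ x ∈ T, w x * ⟪v, x - μwT⟫ ^ 2 ≤ 2 * lam)
    (hwS : a * (∑ x ∈ T, w x) / 2 ≤ ∑ x ∈ S, w x)
    (hwS2 : 3 * S.card / 4 ≤ ∑ x ∈ S, w x)
    (μS : EuclideanSpace ℝ (Fin d))
    (hμS : μS = (S.card : ℝ)⁻¹ • ∑ x ∈ S, x)
    (hcov : ∀ v : EuclideanSpace ℝ (Fin d), ‖v‖ = 1 →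
      (S.card : ℝ)⁻¹ * ∑ x ∈ S, ⟪v, x - μS⟫ ^ 2 ≤ 1) :
    ‖μS - μwT‖ ≤ 1 + Real.sqrt (16 * lam / a) :=
  stmt15_general T S hST w hw hT a lam ha μwT hlam hwS hwS2 μS hμS hcov
end
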